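/- Every positively expansive continuous surjection of a compact metric space is bi-asymptotically c-expansive. -/

import Mathlib

open Filter Topology Function

/-- A full orbit (element of the inverse limit) of `f`. -/
def FullOrbit {X : Type*} (f : X → X) (x : ℤ → X) : Prop := ∀ n : ℤ, f (x n) = x (n + 1)

/-- `f` is bi-asymptotically `c`-expansive with constant `c`. -/
def BiAsympCExpWith {X : Type*} [MetricSpace X] (f : X → X) (c : ℝ) : Prop :=
  (∀ x y : ℤ → X, FullOrbit f x → FullOrbit f y →
      (∀ n : ℕ, dist (x n) (y n) ≤ c) →
      Tendsto (fun n : ℕ => dist (x n) (y n)) atTop (𝓝 0)) ∧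
  (∀ x y : ℤ → X, FullOrbit f x → FullOrbit f y →
      (∀ n : ℕ, dist (x (-(n : ℤ))) (y (-(n : ℤ))) ≤ c) →
      Tendsto (fun n : ℕ => dist (x (-(n : ℤ))) (y (-(n : ℤ)))) atTop (𝓝 0))

/-- `f` is bi-asymptotically `c`-expansive (for some constant). -/
def BiAsympCExpansive {X : Type*} [MetricSpace X] (f : X → X) : Prop :=
  ∃ c > 0, BiAsympCExpWith f c

/-- `f` has the shadowing property. -/
def Shadowing {X : Type*} [MetricSpace X] (f : X → X) : Prop :=
  ∀ ε > 0, ∃ δ > 0, ∀ x : ℕ → X, (∀ n : ℕ, dist (f (x n)) (x (n + 1)) ≤ δ) →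
    ∃ y : X, ∀ n : ℕ, dist (f^[n] y) (x n) ≤ ε

/-- `x` is a non-wandering point of `f`. -/
def NonWandering {X : Type*} [TopologicalSpace X] (f : X → X) (x : X) : Prop :=
  ∀ U : Set X, IsOpen U → x ∈ U → ∃ n : ℕ, 0 < n ∧ (f^[n] '' U ∩ U).Nonempty

/-- There is a finite `α`-chain from `x` to `y`. -/
def ChainRel {X : Type*} [MetricSpace X] (f : X → X) (α : ℝ) (x y : X) : Prop :=
  ∃ (n : ℕ) (z : ℕ → X), 0 < n ∧ z 0 = x ∧ z n = y ∧
    ∀ i < n, dist (f (z i)) (z (i + 1)) ≤ α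

/-- `x` is a chain recurrent point of `f`. -/
def ChainRecurrent {X : Type*} [MetricSpace X] (f : X → X) (x : X) : Prop :=
  ∀ α > 0, ChainRel f α x x

/-- chain equivalence of chain recurrent points -/
def ChainEquiv {X : Type*} [MetricSpace X] (f : X → X) (x y : X) : Prop :=
  ∀ α > 0, ChainRel f α x y ∧ ChainRel f α y x

/-- basic sets: chain equivalence classes of `CR(f)` -/
def IsBasicSet {X : Type*} [MetricSpace X] (f : X → X) (B : Set X) : Prop :=
  ∃ x : X, ChainRecurrent f x ∧ B = {y | ChainRecurrent f y ∧ ChainEquiv f x y}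

/-- the stable set of `x`. -/
def Ws {X : Type*} [MetricSpace X] (f : X → X) (x : X) : Set X :=
  {y | Tendsto (fun n : ℕ => dist (f^[n] x) (f^[n] y)) atTop (𝓝 0)}

/-- the unstable set of a full orbit `x`. -/
def Wu {X : Type*} [MetricSpace X] (f : X → X) (x : ℤ → X) : Set X :=
  {y₀ | ∃ y : ℤ → X, FullOrbit f y ∧ y 0 = y₀ ∧
    Tendsto (fun n : ℕ => dist (x (-(n : ℤ))) (y (-(n : ℤ)))) atTop (𝓝 0)}

/-- `g` restricted to `A` is topologically transitive. -/
def TopTransOn {X : Type*} [TopologicalSpace X] (g : X → X) (A : Set X) : Prop :=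
  ∀ U V : Set X, IsOpen U → IsOpen V → (U ∩ A).Nonempty → (V ∩ A).Nonempty →
    ∃ n : ℕ, 0 < n ∧ (g^[n] '' (U ∩ A) ∩ (V ∩ A)).Nonempty

/-- `g` restricted to `A` is topologically mixing. -/
def TopMixingOn {X : Type*} [TopologicalSpace X] (g : X → X) (A : Set X) : Prop :=
  ∀ U V : Set X, IsOpen U → IsOpen V → (U ∩ A).Nonempty → (V ∩ A).Nonempty →
    ∃ N : ℕ, ∀ n ≥ N, (g^[n] '' (U ∩ A) ∩ (V ∩ A)).Nonempty

/-- `g` is asymptotically expansive with constant `c`. -/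
def AsympExpWith {X : Type*} [MetricSpace X] (g : X → X) (c : ℝ) : Prop :=
  ∀ x y : X, (∀ n : ℕ, dist (g^[n] x) (g^[n] y) ≤ c) →
    Tendsto (fun n : ℕ => dist (g^[n] x) (g^[n] y)) atTop (𝓝 0)


/-! Forward in time the orbits even coincide: two full orbits that stay `c`-close along
`ℕ` agree at time `0` by positive expansivity, hence at every positive time. Backward in
time, compactness upgrades positive expansivity to a uniform statement: points whose first
`N` iterates stay `c`-close are `ε`-close. Two full orbits that stay `c`-close at all
negative times are then `ε`-close at every time `-n` with `n ≥ N`, since from there the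
orbits run `N` steps forward still `c`-close. -/

theorem FullOrbit.iterate_apply {X : Type*} {f : X → X} {x : ℤ → X} (hx : FullOrbit f x)
    (k : ℕ) (m : ℤ) : f^[k] (x m) = x (m + k) := by
  induction k with
  | zero => simp
  | succ k ih =>
    rw [iterate_succ_apply', ih, hx]
    push_cast
    ring_nf

theorem FullOrbit.iterate_apply_zero {X : Type*} {f : X → X} {x : ℤ → X} (hx : FullOrbit f x)
    (n : ℕ) : f^[n] (x 0) = x n := by
  simpa using hx.iterate_apply n 0

theorem exists_dist_lt_of_forall_dist_iterate_le {X : Type*} [MetricSpace X] [CompactSpace X]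
    {f : X → X} (hf : Continuous f) {c : ℝ}
    (hexp : ∀ x y : X, (∀ n : ℕ, dist (f^[n] x) (f^[n] y) ≤ c) → x = y)
    {ε : ℝ} (hε : 0 < ε) :
    ∃ N : ℕ, ∀ x y : X, (∀ k ≤ N, dist (f^[k] x) (f^[k] y) ≤ c) → dist x y < ε := by
  let K : ℕ → Set (X × X) := fun N ↦
    {p | ε ≤ dist p.1 p.2} ∩ ⋂ k ∈ Set.Iic N, {p | dist (f^[k] p.1) (f^[k] p.2) ≤ c}
  have hK_closed (N : ℕ) : IsClosed (K N) := by
    refine (isClosed_le continuous_const continuous_dist).inter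
      (isClosed_biInter fun k _ ↦ isClosed_le ?_ continuous_const)
    exact ((hf.iterate k).comp continuous_fst).dist ((hf.iterate k).comp continuous_snd)
  have hK_anti : Antitone K := fun _ _ hMN ↦
    Set.inter_subset_inter_right _ <| Set.biInter_subset_biInter_left <| Set.Iic_subset_Iic.2 hMN
  have hK_iInter : Set.univ ∩ ⋂ N, K N = ∅ := by
    refine Set.eq_empty_of_forall_notMem fun p ⟨_, hp⟩ ↦ ?_
    simp only [K, Set.mem_iInter, Set.mem_inter_iff, Set.mem_ofPred_eq, Set.mem_Iic] at hp
    have hdiag : p.1 = p.2 := hexp _ _ fun n ↦ (hp n).2 n le_rfl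
    have hε_le := (hp 0).1
    rw [hdiag, dist_self] at hε_le
    exact hε.not_ge hε_le
  obtain ⟨N, hN⟩ := isCompact_univ.elim_directed_family_closed K hK_closed hK_iInter
    hK_anti.directed_ge
  exact ⟨N, fun x y hxy ↦ not_le.1 fun hε_le ↦
    Set.eq_empty_iff_forall_notMem.1 hN (x, y) ⟨trivial, hε_le, Set.mem_iInter₂.2 hxy⟩⟩

theorem FullOrbit.eq_of_forall_dist_le {X : Type*} [MetricSpace X] {f : X → X} {c : ℝ}
    (hexp : ∀ x y : X, (∀ n : ℕ, dist (f^[n] x) (f^[n] y) ≤ c) → x = y)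
    {x y : ℤ → X} (hx : FullOrbit f x) (hy : FullOrbit f y)
    (hxy : ∀ n : ℕ, dist (x n) (y n) ≤ c) (n : ℕ) : x n = y n := by
  have h₀ : x 0 = y 0 := hexp _ _ fun n ↦ by
    rw [hx.iterate_apply_zero, hy.iterate_apply_zero]
    exact hxy n
  rw [← hx.iterate_apply_zero, ← hy.iterate_apply_zero, h₀]

theorem FullOrbit.tendsto_dist_neg {X : Type*} [MetricSpace X] [CompactSpace X]
    {f : X → X} (hf : Continuous f) {c : ℝ}
    (hexp : ∀ x y : X, (∀ n : ℕ, dist (f^[n] x) (f^[n] y) ≤ c) → x = y)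
    {x y : ℤ → X} (hx : FullOrbit f x) (hy : FullOrbit f y)
    (hxy : ∀ n : ℕ, dist (x (-(n : ℤ))) (y (-(n : ℤ))) ≤ c) :
    Tendsto (fun n : ℕ ↦ dist (x (-(n : ℤ))) (y (-(n : ℤ)))) atTop (𝓝 0) := by
  rw [Metric.tendsto_atTop]
  intro ε hε
  obtain ⟨N, hN⟩ := exists_dist_lt_of_forall_dist_iterate_le hf hexp hε
  refine ⟨N, fun n hn ↦ ?_⟩
  rw [dist_zero_right, Real.norm_of_nonneg dist_nonneg]
  refine hN _ _ fun k hk ↦ ?_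
  have hshift : -(n : ℤ) + k = -((n - k : ℕ) : ℤ) := by omega
  rw [hx.iterate_apply, hy.iterate_apply, hshift]
  exact hxy _

theorem biAsympCExpansive_of_posExpansive_general {X : Type*} [MetricSpace X] [CompactSpace X]
    (f : X → X) (hf : Continuous f)
    (c : ℝ) (hc : 0 < c)
    (hexp : ∀ x y : X, (∀ n : ℕ, dist (f^[n] x) (f^[n] y) ≤ c) → x = y) :
    BiAsympCExpansive f := by
  refine ⟨c, hc, fun x y hx hy hxy ↦ ?_, fun x y hx hy hxy ↦ ?_⟩
  · have hzero (n : ℕ) : dist (x n) (y n) = 0 := by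
      rw [hx.eq_of_forall_dist_le hexp hy hxy n, dist_self]
    simpa only [hzero] using tendsto_const_nhds
  · exact hx.tendsto_dist_neg hf hexp hy hxy

/-- Every positively expansive continuous surjection of a compact metric space is
bi-asymptotically `c`-expansive. -/
theorem biAsympCExpansive_of_posExpansive {X : Type*} [MetricSpace X] [CompactSpace X]
    (f : X → X) (hf : Continuous f) (hsurj : Function.Surjective f)
    (c : ℝ) (hc : 0 < c)
    (hexp : ∀ x y : X, (∀ n : ℕ, dist (f^[n] x) (f^[n] y) ≤ c) → x = y) :
    BiAsympCExpansive f :=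
  biAsympCExpansive_of_posExpansive_general f hf c hc hexp
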